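/- arXiv:math/0311389 — 2 statements merged into one kernel-verified Lean document; each statement's English description precedes it below -/
import Mathlib

section
/- The polynomial x⁸ + 2x⁶ + 6x⁴ + 2x² + 1 is irreducible over ℚ. -/
open Polynomial

instance : Fact (Nat.Prime 5) := ⟨by norm_num⟩

private theorem rep4 (p : ℤ[X]) (hm : p.Monic) (h4 : p.natDegree = 4) :
    p = X^4 + C (p.coeff 3)*X^3 + C (p.coeff 2)*X^2 + C (p.coeff 1)*X + C (p.coeff 0) := by
  have h := p.as_sum_range' 5 (by omega)
  have hc4 : p.coeff 4 = 1 := by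
    have := hm.coeff_natDegree; rwa [h4] at this
  conv_lhs => rw [h]
  simp only [Finset.sum_range_succ, Finset.sum_range_zero, ← C_mul_X_pow_eq_monomial, hc4, map_one]
  ring

private theorem rep2 {F : Type*} [Field F] (p : F[X]) (hm : p.Monic) (h2 : p.natDegree = 2) :
    p = X^2 + C (p.coeff 1)*X + C (p.coeff 0) := by
  have h := p.as_sum_range' 3 (by omega)
  have hc2 : p.coeff 2 = 1 := by
    have := hm.coeff_natDegree; rwa [h2] at this
  conv_lhs => rw [h]
  simp only [Finset.sum_range_succ, Finset.sum_range_zero, ← C_mul_X_pow_eq_monomial, hc2, map_one]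
  ring

private theorem quartic_irred (q : (ZMod 5)[X]) (hm : q.Monic) (h4 : q.natDegree = 4)
    (hroot : ∀ x : ZMod 5, eval x q ≠ 0)
    (hquad : ∀ a b c d : ZMod 5, (X^2+C a*X+C b) * (X^2+C c*X+C d) ≠ q) : Irreducible q := by
  constructor
  · exact not_isUnit_of_natDegree_pos q (by omega)
  intro s t hst
  by_contra hcon
  push_neg at hcon
  obtain ⟨hsu, htu⟩ := hcon
  have hq0 : q ≠ 0 := hm.ne_zero
  have hs0 : s ≠ 0 := fun h => hq0 (by simp [hst, h])
  have ht0 : t ≠ 0 := fun h => hq0 (by simp [hst, h])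
  have hdeg : s.natDegree + t.natDegree = 4 := by
    rw [← natDegree_mul hs0 ht0, ← hst, h4]
  have hs1 : 1 ≤ s.natDegree := by
    rcases Nat.eq_zero_or_pos s.natDegree with h | h
    · exfalso
      apply hsu
      rw [eq_C_of_natDegree_eq_zero h]
      refine isUnit_C.mpr (isUnit_iff_ne_zero.mpr (fun h0 => hs0 ?_))
      rw [eq_C_of_natDegree_eq_zero h, h0, map_zero]
    · exact h
  have ht1 : 1 ≤ t.natDegree := by
    rcases Nat.eq_zero_or_pos t.natDegree with h | h
    · exfalso
      apply htu
      rw [eq_C_of_natDegree_eq_zero h]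
      refine isUnit_C.mpr (isUnit_iff_ne_zero.mpr (fun h0 => ht0 ?_))
      rw [eq_C_of_natDegree_eq_zero h, h0, map_zero]
    · exact h
  have root_of_deg1 : ∀ p r : (ZMod 5)[X], p ≠ 0 → p.natDegree = 1 → q = p * r → False := by
    intro p r hp0 hp1 hq
    have hd1 : p.degree = 1 := by
      rw [degree_eq_natDegree hp0, hp1]; rfl
    have hrep := eq_X_add_C_of_degree_eq_one hd1
    have hlc : p.leadingCoeff ≠ 0 := leadingCoeff_ne_zero.mpr hp0
    apply hroot (-(p.coeff 0) / p.leadingCoeff)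
    have hev : eval (-(p.coeff 0) / p.leadingCoeff) p = 0 := by
      conv_lhs => arg 2; rw [hrep]
      simp only [eval_add, eval_mul, eval_C, eval_X]
      rw [mul_div_assoc', mul_div_cancel_left₀ _ hlc]
      ring
    rw [hq, eval_mul, hev, zero_mul]
  rcases (show s.natDegree = 1 ∨ s.natDegree = 2 ∨ s.natDegree = 3 by omega) with h1 | h2 | h3
  · exact root_of_deg1 s t hs0 h1 hst
  · have ht2 : t.natDegree = 2 := by omega
    have hlc : s.leadingCoeff * t.leadingCoeff = 1 := by
      rw [← leadingCoeff_mul, ← hst]; exact hm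
    have hs' := monic_mul_leadingCoeff_inv hs0
    have ht' := monic_mul_leadingCoeff_inv ht0
    have hds' : (s * C s.leadingCoeff⁻¹).natDegree = 2 := by
      rw [natDegree_mul_leadingCoeff_inv s hs0]; exact h2
    have hdt' : (t * C t.leadingCoeff⁻¹).natDegree = 2 := by
      rw [natDegree_mul_leadingCoeff_inv t ht0]; exact ht2
    apply hquad ((s * C s.leadingCoeff⁻¹).coeff 1) ((s * C s.leadingCoeff⁻¹).coeff 0)
      ((t * C t.leadingCoeff⁻¹).coeff 1) ((t * C t.leadingCoeff⁻¹).coeff 0)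
    rw [← rep2 _ hs' hds', ← rep2 _ ht' hdt']
    have hst0 : s.leadingCoeff ≠ 0 := leadingCoeff_ne_zero.mpr hs0
    have htt0 : t.leadingCoeff ≠ 0 := leadingCoeff_ne_zero.mpr ht0
    have hinv : s.leadingCoeff⁻¹ * t.leadingCoeff⁻¹ = 1 := by
      field_simp
      linear_combination -hlc
    calc s * C s.leadingCoeff⁻¹ * (t * C t.leadingCoeff⁻¹)
        = (s * t) * C (s.leadingCoeff⁻¹ * t.leadingCoeff⁻¹) := by rw [C_mul]; ring
      _ = q := by rw [← hst, hinv, map_one, mul_one]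
  · exact root_of_deg1 t s ht0 (by omega) (by rw [hst, mul_comm])

private theorem q1_irred : Irreducible (X^4+X^3+C 4*X^2+X+C 1 : (ZMod 5)[X]) := by
  apply quartic_irred
  · monicity!
  · compute_degree!
  · intro x
    have : ∀ y : ZMod 5, y^4+y^3+4*y^2+y+1 ≠ 0 := by decide
    simpa using this x
  · intro a b c d h
    rw [show ((X^2+C a*X+C b) * (X^2+C c*X+C d) : (ZMod 5)[X])
        = X^4 + C (a+c)*X^3 + C (b+d+a*c)*X^2 + C (a*d+b*c)*X + C (b*d) by
      simp only [C_add, C_mul]; ring] at h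
    have h0 := congrArg (fun p => coeff p 0) h
    have h1 := congrArg (fun p => coeff p 1) h
    have h2 := congrArg (fun p => coeff p 2) h
    have h3 := congrArg (fun p => coeff p 3) h
    simp only [coeff_add, coeff_C_mul, coeff_X_pow, coeff_C, coeff_X, coeff_one] at h0 h1 h2 h3
    norm_num at h0 h1 h2 h3
    clear h
    revert h0 h1 h2 h3
    revert a b c d
    decide

private theorem q2_irred : Irreducible (X^4+C 4*X^3+C 4*X^2+C 4*X+C 1 : (ZMod 5)[X]) := by
  apply quartic_irred
  · monicity!
  · compute_degree!
  · intro x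
    have : ∀ y : ZMod 5, y^4+4*y^3+4*y^2+4*y+1 ≠ 0 := by decide
    simpa using this x
  · intro a b c d h
    rw [show ((X^2+C a*X+C b) * (X^2+C c*X+C d) : (ZMod 5)[X])
        = X^4 + C (a+c)*X^3 + C (b+d+a*c)*X^2 + C (a*d+b*c)*X + C (b*d) by
      simp only [C_add, C_mul]; ring] at h
    have h0 := congrArg (fun p => coeff p 0) h
    have h1 := congrArg (fun p => coeff p 1) h
    have h2 := congrArg (fun p => coeff p 2) h
    have h3 := congrArg (fun p => coeff p 3) h
    simp only [coeff_add, coeff_C_mul, coeff_X_pow, coeff_C, coeff_X, coeff_one] at h0 h1 h2 h3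
    norm_num at h0 h1 h2 h3
    clear h
    revert h0 h1 h2 h3
    revert a b c d
    decide

private theorem deg_claim (s t : (ZMod 5)[X])
    (h : s * t = (X^4+X^3+C 4*X^2+X+C 1) * (X^4+C 4*X^3+C 4*X^2+C 4*X+C 1))
    (hs1 : 1 ≤ s.natDegree) (hs3 : s.natDegree ≤ 3) : False := by
  set q1 : (ZMod 5)[X] := X^4+X^3+C 4*X^2+X+C 1 with hq1def
  set q2 : (ZMod 5)[X] := X^4+C 4*X^3+C 4*X^2+C 4*X+C 1 with hq2def
  have hm1 : q1.Monic := by rw [hq1def]; monicity!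
  have hm2 : q2.Monic := by rw [hq2def]; monicity!
  have hd2 : q2.natDegree = 4 := by rw [hq2def]; compute_degree!
  have hq10 : q1 ≠ 0 := hm1.ne_zero
  have hq20 : q2 ≠ 0 := hm2.ne_zero
  have hs0 : s ≠ 0 := by
    rintro rfl
    exact mul_ne_zero hq10 hq20 (by rw [← h, zero_mul])
  have ht0 : t ≠ 0 := by
    rintro rfl
    exact mul_ne_zero hq10 hq20 (by rw [← h, mul_zero])
  have hp1 : Prime q1 := (UniqueFactorizationMonoid.irreducible_iff_prime).mp q1_irred
  have hdvd : q1 ∣ s * t := ⟨q2, h⟩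
  rcases hp1.2.2 s t hdvd with hds | hdt
  · have h4 := natDegree_le_of_dvd hds hs0
    have : q1.natDegree = 4 := by rw [hq1def]; compute_degree!
    omega
  · obtain ⟨w, rfl⟩ := hdt
    have hw0 : w ≠ 0 := by
      rintro rfl
      exact ht0 (mul_zero q1)
    have hcan : s * w = q2 := by
      have : q1 * (s * w) = q1 * q2 := by rw [← h]; ring
      exact mul_left_cancel₀ hq10 this
    rcases q2_irred.2 hcan.symm with hu | hu
    · exact not_isUnit_of_natDegree_pos s (by omega) hu
    · have hw : w.natDegree = 0 := natDegree_eq_zero_of_isUnit hu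
      have := natDegree_mul hs0 hw0
      rw [hcan, hd2, hw] at this
      omega

private theorem F_map_eq :
    (X^8 + 2*X^6 + 6*X^4 + 2*X^2 + 1 : ℤ[X]).map (Int.castRingHom (ZMod 5))
      = (X^4+X^3+C 4*X^2+X+C 1) * (X^4+C 4*X^3+C 4*X^2+C 4*X+C 1) := by
  have key : (X^8 + 2*X^6 + 6*X^4 + 2*X^2 + 1 : ℤ[X])
      = (X^4+X^3+4*X^2+X+1) * (X^4+4*X^3+4*X^2+4*X+1)
        - 5*(X^7+2*X^6+5*X^5+4*X^4+5*X^3+2*X^2+X) := by ring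
  rw [key]
  simp only [Polynomial.map_sub, Polynomial.map_mul, Polynomial.map_add, Polynomial.map_pow,
    map_X, Polynomial.map_ofNat, Polynomial.map_one]
  have h5 : (5 : (ZMod 5)[X]) = 0 := by
    rw [← map_ofNat (C : ZMod 5 →+* (ZMod 5)[X]) 5, show (5 : ZMod 5) = 0 by decide, map_zero]
  have h4 : (4 : (ZMod 5)[X]) = C 4 := (map_ofNat (C : ZMod 5 →+* (ZMod 5)[X]) 4).symm
  rw [h5, zero_mul, sub_zero, h4, C_1]

private theorem unit_of_deg_zero (s : ℤ[X]) (h0 : s.natDegree = 0)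
    (hlc : s.leadingCoeff = 1 ∨ s.leadingCoeff = -1) : IsUnit s := by
  have hc : s.leadingCoeff = s.coeff 0 := by rw [Polynomial.leadingCoeff, h0]
  rw [eq_C_of_natDegree_eq_zero h0]
  exact isUnit_C.mpr (Int.isUnit_iff.mpr (by rw [← hc]; exact hlc))

private theorem map_lc_ne_zero (s : ℤ[X]) (hlc : s.leadingCoeff = 1 ∨ s.leadingCoeff = -1) :
    (Int.castRingHom (ZMod 5)) s.leadingCoeff ≠ 0 := by
  rcases hlc with h | h <;> rw [h] <;> decide

/-- No nontrivial factor of F has degree 1,2,3 (nor 5,6,7 by symmetry). -/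
private theorem deg_not_small (s t : ℤ[X]) (h : s * t = X^8 + 2*X^6 + 6*X^4 + 2*X^2 + 1)
    (hlc : s.leadingCoeff = 1 ∨ s.leadingCoeff = -1)
    (h1 : 1 ≤ s.natDegree) (h3 : s.natDegree ≤ 3) : False := by
  apply deg_claim (s.map (Int.castRingHom (ZMod 5))) (t.map (Int.castRingHom (ZMod 5)))
  · rw [← Polynomial.map_mul, h]
    exact F_map_eq
  · rw [natDegree_map_of_leadingCoeff_ne_zero _ (map_lc_ne_zero s hlc)]
    exact h1
  · rw [natDegree_map_of_leadingCoeff_ne_zero _ (map_lc_ne_zero s hlc)]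
    exact h3

private theorem eq_of_monic_dvd {p q : ℤ[X]} (hp : p.Monic) (hq : q.Monic)
    (hd : p.natDegree = q.natDegree) (hdvd : p ∣ q) : p = q := by
  obtain ⟨k, hk⟩ := hdvd
  have hk0 : k ≠ 0 := by
    rintro rfl
    exact hq.ne_zero (by rw [hk, mul_zero])
  have hdeg := natDegree_mul hp.ne_zero hk0
  rw [← hk, hd] at hdeg
  have hkd : k.natDegree = 0 := by omega
  have hlck : k.leadingCoeff = 1 := by
    have := leadingCoeff_mul p k
    rw [← hk, hq.leadingCoeff, hp.leadingCoeff, one_mul] at this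
    exact this.symm
  have : k = 1 := by
    rw [eq_C_of_natDegree_eq_zero hkd, show k.coeff 0 = k.leadingCoeff by
      rw [Polynomial.leadingCoeff, hkd], hlck, map_one]
  rw [hk, this, mul_one]

private theorem caseA_arith (b d f k : ℤ) (h0 : d*k = 1) (h4 : d+k+b*f = 6)
    (h6 : b+f = 2) (h2 : b*k+d*f = 2) : False := by
  rcases Int.mul_eq_one_iff_eq_one_or_neg_one.mp h0 with ⟨hd1, hk1⟩ | ⟨hd1, hk1⟩
  · subst hd1; subst hk1
    nlinarith [sq_nonneg (b - f), sq_nonneg (b + f)]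
  · subst hd1; subst hk1
    omega

private theorem caseB_arith (a b c d : ℤ) (h0 : d = 1 ∨ d = -1)
    (h2 : 2*b*d - c^2 = 2) (h4 : b^2 + 2*d - 2*a*c = 6) (h6 : 2*b - a^2 = 2) : False := by
  rcases h0 with hd1 | hd1
  · subst hd1
    have hac : (a - c) * (a + c) = 0 := by linear_combination h2 - h6
    rcases mul_eq_zero.mp hac with hac | hac
    · have hbb : b * (b - 4) = 0 := by linear_combination h4 - 2*h6 - 2*a*hac
      rcases mul_eq_zero.mp hbb with hb0 | hb0
      · nlinarith [sq_nonneg a]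
      · have ha6 : a^2 = 6 := by linarith
        have hup : 6*a ≤ 15 := by nlinarith [sq_nonneg (a-3)]
        have hdn : -15 ≤ 6*a := by nlinarith [sq_nonneg (a+3)]
        have hb1 : a ≤ 2 := by omega
        have hb2 : -2 ≤ a := by omega
        interval_cases a <;> norm_num at ha6
    · have hbb : b^2 + 4*b - 8 = 0 := by linear_combination h4 + 2*h6 + 2*a*hac
      have hup' : 8*b ≤ 12 := by nlinarith [sq_nonneg (b-2)]
      have hdn' : -44 ≤ 8*b := by nlinarith [sq_nonneg (b+6)]
      have hup : b ≤ 1 := by omega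
      have hdn : -5 ≤ b := by omega
      interval_cases b <;> norm_num at hbb
  · subst hd1
    nlinarith [sq_nonneg a, sq_nonneg c]

-- main 4+4 impossibility over ℤ
private theorem no44 (u v : ℤ[X]) (hu : u.Monic) (hv : v.Monic)
    (hu4 : u.natDegree = 4) (hv4 : v.natDegree = 4)
    (hF : u * v = X^8 + 2*X^6 + 6*X^4 + 2*X^2 + 1) : False := by
  -- u is irreducible
  have huirr : Irreducible u := by
    constructor
    · exact not_isUnit_of_natDegree_pos u (by omega)
    intro p q hpq
    by_contra hcon
    push_neg at hcon
    obtain ⟨hpu, hqu⟩ := hcon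
    have hp0 : p ≠ 0 := by rintro rfl; exact hu.ne_zero (by rw [hpq, zero_mul])
    have hq0 : q ≠ 0 := by rintro rfl; exact hu.ne_zero (by rw [hpq, mul_zero])
    have hdeg : p.natDegree + q.natDegree = 4 := by
      rw [← natDegree_mul hp0 hq0, ← hpq, hu4]
    have hlcpq : p.leadingCoeff * q.leadingCoeff = 1 := by
      rw [← leadingCoeff_mul, ← hpq]; exact hu
    have hlcp : p.leadingCoeff = 1 ∨ p.leadingCoeff = -1 := by
      rcases Int.mul_eq_one_iff_eq_one_or_neg_one.mp hlcpq with ⟨h1, _⟩ | ⟨h1, _⟩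
      · exact Or.inl h1
      · exact Or.inr h1
    have hlcq : q.leadingCoeff = 1 ∨ q.leadingCoeff = -1 := by
      rcases Int.mul_eq_one_iff_eq_one_or_neg_one.mp hlcpq with ⟨_, h1⟩ | ⟨_, h1⟩
      · exact Or.inl h1
      · exact Or.inr h1
    rcases Nat.eq_zero_or_pos p.natDegree with hz | hpos
    · exact hpu (unit_of_deg_zero p hz hlcp)
    rcases Nat.lt_or_ge p.natDegree 4 with hlt | hge
    · exact deg_not_small p (q * v) (by rw [← mul_assoc, ← hpq, hF]) hlcp hpos (by omega)
    · have : q.natDegree = 0 := by omega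
      exact hqu (unit_of_deg_zero q this hlcq)
  have huprime : Prime u := (UniqueFactorizationMonoid.irreducible_iff_prime).mp huirr
  -- representations
  set a := u.coeff 3 with ha
  set b := u.coeff 2 with hb
  set c := u.coeff 1 with hc
  set d := u.coeff 0 with hd
  set e := v.coeff 3 with he
  set f := v.coeff 2 with hf
  set g := v.coeff 1 with hg
  set k := v.coeff 0 with hk
  have hurep : u = X^4 + C a*X^3 + C b*X^2 + C c*X + C d := rep4 u hu hu4
  have hvrep : v = X^4 + C e*X^3 + C f*X^2 + C g*X + C k := rep4 v hv hv4
  -- composition with -X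
  have hucomp : u.comp (-X) = X^4 + C (-a)*X^3 + C b*X^2 + C (-c)*X + C d := by
    conv_lhs => rw [hurep]
    simp only [add_comp, mul_comp, pow_comp, X_comp, C_comp, C_neg]
    ring
  have hvcomp : v.comp (-X) = X^4 + C (-e)*X^3 + C f*X^2 + C (-g)*X + C k := by
    conv_lhs => rw [hvrep]
    simp only [add_comp, mul_comp, pow_comp, X_comp, C_comp, C_neg]
    ring
  have hFcomp : ((X^8 + 2*X^6 + 6*X^4 + 2*X^2 + 1 : ℤ[X])).comp (-X)
      = X^8 + 2*X^6 + 6*X^4 + 2*X^2 + 1 := by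
    simp only [add_comp, mul_comp, pow_comp, X_comp, ofNat_comp, one_comp]
    ring
  have hF2 : (u.comp (-X)) * (v.comp (-X)) = X^8 + 2*X^6 + 6*X^4 + 2*X^2 + 1 := by
    rw [← mul_comp, hF, hFcomp]
  have hwmonic : (u.comp (-X)).Monic := by
    rw [hucomp]; monicity!
  have hwdeg : (u.comp (-X)).natDegree = 4 := by
    rw [hucomp]; compute_degree!
  have hvcmonic : (v.comp (-X)).Monic := by
    rw [hvcomp]; monicity!
  have hvcdeg : (v.comp (-X)).natDegree = 4 := by
    rw [hvcomp]; compute_degree!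
  have hudvd : u ∣ (u.comp (-X)) * (v.comp (-X)) := by
    rw [hF2, ← hF]
    exact ⟨v, rfl⟩
  -- helper to extract coefficient equations from a polynomial identity
  have FC : (X^8 + 2*X^6 + 6*X^4 + 2*X^2 + 1 : ℤ[X])
      = X^8 + C 2*X^6 + C 6*X^4 + C 2*X^2 + C 1 := by
    simp only [map_ofNat, C_1]
  rcases huprime.2.2 _ _ hudvd with hcase | hcase
  · -- u = u.comp(-X) : u and v are even
    have huw : u = u.comp (-X) :=
      eq_of_monic_dvd hu hwmonic (by omega) hcase
    have ha0 : a = 0 ∧ c = 0 := by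
      have h := huw
      rw [hucomp] at h; conv_lhs at h => rw [hurep]
      have h3 := congrArg (fun p => coeff p 3) h
      have h1 := congrArg (fun p => coeff p 1) h
      simp only [coeff_add, coeff_C_mul, coeff_X_pow, coeff_C, coeff_X, coeff_one] at h3 h1
      norm_num at h3 h1
      omega
    have hvw : v = v.comp (-X) := by
      have : u * v = u * (v.comp (-X)) := by
        rw [hF, ← hF2, ← huw]
      exact mul_left_cancel₀ hu.ne_zero this
    have he0 : e = 0 ∧ g = 0 := by
      have h := hvw
      rw [hvcomp] at h; conv_lhs at h => rw [hvrep]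
      have h3 := congrArg (fun p => coeff p 3) h
      have h1 := congrArg (fun p => coeff p 1) h
      simp only [coeff_add, coeff_C_mul, coeff_X_pow, coeff_C, coeff_X, coeff_one] at h3 h1
      norm_num at h3 h1
      omega
    obtain ⟨ha0, hc0⟩ := ha0
    obtain ⟨he0, hg0⟩ := he0
    have hprod : (X^8 + C (b+f)*X^6 + C (d+k+b*f)*X^4 + C (b*k+d*f)*X^2 + C (d*k) : ℤ[X])
        = X^8 + C 2*X^6 + C 6*X^4 + C 2*X^2 + C 1 := by
      rw [← FC, ← hF, hurep, hvrep, ha0, hc0, he0, hg0]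
      simp only [C_add, C_mul, C_0]
      ring
    have h0 := congrArg (fun p => coeff p 0) hprod
    have h2 := congrArg (fun p => coeff p 2) hprod
    have h4 := congrArg (fun p => coeff p 4) hprod
    have h6 := congrArg (fun p => coeff p 6) hprod
    simp only [coeff_add, coeff_C_mul, coeff_X_pow, coeff_C, coeff_X, coeff_one] at h0 h2 h4 h6
    norm_num at h0 h2 h4 h6
    exact caseA_arith b d f k (by linear_combination h0) (by linear_combination h4)
      (by linear_combination h6) (by linear_combination h2)
  · -- v.comp(-X) = u, so F = u * u.comp(-X)
    have hvcu : v.comp (-X) = u :=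
      (eq_of_monic_dvd hu hvcmonic (by omega) hcase).symm
    -- equate coefficients of u and v.comp(-X)
    have hcoeffs : e = -a ∧ f = b ∧ g = -c ∧ k = d := by
      have h := hvcu
      rw [hvcomp] at h; conv_rhs at h => rw [hurep]
      have h3 := congrArg (fun p => coeff p 3) h
      have h2 := congrArg (fun p => coeff p 2) h
      have h1 := congrArg (fun p => coeff p 1) h
      have h0 := congrArg (fun p => coeff p 0) h
      simp only [coeff_add, coeff_C_mul, coeff_X_pow, coeff_C, coeff_X, coeff_one] at h3 h2 h1 h0
      norm_num at h3 h2 h1 h0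
      omega
    obtain ⟨he1, hf1, hg1, hk1⟩ := hcoeffs
    have hprod : (X^8 + C (2*b-a^2)*X^6 + C (b^2+2*d-2*a*c)*X^4 + C (2*b*d-c^2)*X^2 + C (d^2) : ℤ[X])
        = X^8 + C 2*X^6 + C 6*X^4 + C 2*X^2 + C 1 := by
      rw [← FC, ← hF, hurep, hvrep, he1, hf1, hg1, hk1]
      simp only [C_add, C_mul, C_sub, C_pow, C_neg, map_ofNat]
      ring
    have h0 := congrArg (fun p => coeff p 0) hprod
    have h2 := congrArg (fun p => coeff p 2) hprod
    have h4 := congrArg (fun p => coeff p 4) hprod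
    have h6 := congrArg (fun p => coeff p 6) hprod
    simp only [coeff_add, coeff_C_mul, coeff_X_pow, coeff_C, coeff_X, coeff_one] at h0 h2 h4 h6
    norm_num at h0 h2 h4 h6
    exact caseB_arith a b c d h0 (by linear_combination h2) (by linear_combination h4)
      (by linear_combination h6)

private theorem F_irred : Irreducible (X^8 + 2*X^6 + 6*X^4 + 2*X^2 + 1 : ℤ[X]) := by
  have hm : (X^8 + 2*X^6 + 6*X^4 + 2*X^2 + 1 : ℤ[X]).Monic := by monicity!
  have h8 : (X^8 + 2*X^6 + 6*X^4 + 2*X^2 + 1 : ℤ[X]).natDegree = 8 := by compute_degree!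
  constructor
  · exact not_isUnit_of_natDegree_pos _ (by omega)
  intro s t hst
  by_contra hcon
  push_neg at hcon
  obtain ⟨hsu, htu⟩ := hcon
  have hs0 : s ≠ 0 := by rintro rfl; exact hm.ne_zero (by rw [hst, zero_mul])
  have ht0 : t ≠ 0 := by rintro rfl; exact hm.ne_zero (by rw [hst, mul_zero])
  have hdeg : s.natDegree + t.natDegree = 8 := by
    rw [← natDegree_mul hs0 ht0, ← hst, h8]
  have hlcst : s.leadingCoeff * t.leadingCoeff = 1 := by
    rw [← leadingCoeff_mul, ← hst]; exact hm
  have hlcs : s.leadingCoeff = 1 ∨ s.leadingCoeff = -1 := by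
    rcases Int.mul_eq_one_iff_eq_one_or_neg_one.mp hlcst with ⟨h1, _⟩ | ⟨h1, _⟩
    · exact Or.inl h1
    · exact Or.inr h1
  have hlct : t.leadingCoeff = 1 ∨ t.leadingCoeff = -1 := by
    rcases Int.mul_eq_one_iff_eq_one_or_neg_one.mp hlcst with ⟨_, h1⟩ | ⟨_, h1⟩
    · exact Or.inl h1
    · exact Or.inr h1
  rcases Nat.eq_zero_or_pos s.natDegree with hz | hspos
  · exact hsu (unit_of_deg_zero s hz hlcs)
  rcases Nat.eq_zero_or_pos t.natDegree with hz | htpos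
  · exact htu (unit_of_deg_zero t hz hlct)
  have hsnot : ¬(1 ≤ s.natDegree ∧ s.natDegree ≤ 3) := by
    rintro ⟨h1, h3⟩
    exact deg_not_small s t hst.symm hlcs h1 h3
  have htnot : ¬(1 ≤ t.natDegree ∧ t.natDegree ≤ 3) := by
    rintro ⟨h1, h3⟩
    exact deg_not_small t s (by rw [mul_comm, ← hst]) hlct h1 h3
  have hs4 : s.natDegree = 4 := by omega
  have ht4 : t.natDegree = 4 := by omega
  rcases Int.mul_eq_one_iff_eq_one_or_neg_one.mp hlcst with ⟨h1, h2⟩ | ⟨h1, h2⟩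
  · exact no44 s t h1 h2 hs4 ht4 hst.symm
  · refine no44 (-s) (-t) ?_ ?_ ?_ ?_ ?_
    · unfold Polynomial.Monic
      rw [leadingCoeff_neg, h1]; ring
    · unfold Polynomial.Monic
      rw [leadingCoeff_neg, h2]; ring
    · rw [natDegree_neg]; exact hs4
    · rw [natDegree_neg]; exact ht4
    · rw [neg_mul_neg, ← hst]

theorem x0_field_poly_irreducible :
    Irreducible (X ^ 8 + 2 * X ^ 6 + 6 * X ^ 4 + 2 * X ^ 2 + 1 : ℚ[X]) := by
  have hm : (X^8 + 2*X^6 + 6*X^4 + 2*X^2 + 1 : ℤ[X]).Monic := by monicity!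
  have hmap : (X ^ 8 + 2 * X ^ 6 + 6 * X ^ 4 + 2 * X ^ 2 + 1 : ℚ[X])
      = (X^8 + 2*X^6 + 6*X^4 + 2*X^2 + 1 : ℤ[X]).map (Int.castRingHom ℚ) := by
    simp only [Polynomial.map_add, Polynomial.map_mul, Polynomial.map_pow, map_X,
      Polynomial.map_ofNat, Polynomial.map_one]
  rw [hmap]
  exact (IsPrimitive.Int.irreducible_iff_irreducible_map_cast hm.isPrimitive).mp F_irred
end

section
/- Let f, w ∈ SL(2,ℂ) with fw − wf invertible, and let f₂, w₂ ∈ SL(2,ℂ) satisfy tr(f₂) = tr(f), tr(w₂) = tr(w), and tr(f₂⁻¹w₂) = tr(f⁻¹w), with f₂w₂ − w₂f₂ also invertible. Then there exists g ∈ GL(2,ℂ) with g f g⁻¹ = f₂ and g w g⁻¹ = w₂. -/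
open Matrix

/-- Trace identity: for `det f = 1`, `tr(f⁻¹ * w) = tr f * tr w - tr (f * w)`. -/
private lemma trace_inv_mul' (f w : Matrix (Fin 2) (Fin 2) ℂ) (hf : f.det = 1) :
    Matrix.trace (f⁻¹ * w) = Matrix.trace f * Matrix.trace w - Matrix.trace (f * w) := by
  rw [Matrix.inv_def, hf, Ring.inverse_one, one_smul, Matrix.adjugate_fin_two]
  rw [Matrix.trace_fin_two, Matrix.trace_fin_two, Matrix.trace_fin_two, Matrix.trace_fin_two]
  simp [Matrix.mul_apply, Fin.sum_univ_two]
  ring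

/-- Any generic pair `(f, w)` in `SL(2, ℂ)` can be simultaneously conjugated so that `f`
becomes the companion matrix of its characteristic polynomial and `w` becomes an explicit
matrix determined by `a` and `tr w`, where `a` is a root of an explicit quadratic. -/
private lemma key_normal_form (f w : Matrix (Fin 2) (Fin 2) ℂ) (hf : f.det = 1)
    (hw : w.det = 1) (hgen : IsUnit (f * w - w * f)) (a : ℂ)
    (ha : a ^ 2 - (Matrix.trace w - Matrix.trace f) * a
        + (2 - Matrix.trace f * Matrix.trace w + Matrix.trace (f * w)) = 0) :
    ∃ g : Matrix (Fin 2) (Fin 2) ℂ, IsUnit g.det ∧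
      f * g = g * !![0, -1; 1, Matrix.trace f] ∧
      w * g = g * !![a, a * (Matrix.trace w - a) - 1; 1, Matrix.trace w - a] := by
  have hf' := hf; have hw' := hw
  rw [Matrix.det_fin_two] at hf' hw'
  -- the matrix w - a•1 - f is singular
  have hdetM : (w - a • (1 : Matrix (Fin 2) (Fin 2) ℂ) - f).det = 0 := by
    rw [Matrix.trace_fin_two, Matrix.trace_fin_two, Matrix.trace_fin_two] at ha
    simp only [Matrix.mul_apply, Fin.sum_univ_two] at ha
    rw [Matrix.det_fin_two]
    simp only [Matrix.sub_apply, Matrix.smul_apply, Matrix.one_apply_eq,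
      Matrix.one_apply_ne (by decide : (0 : Fin 2) ≠ 1),
      Matrix.one_apply_ne (by decide : (1 : Fin 2) ≠ 0), smul_eq_mul]
    ring_nf
    ring_nf at ha hf' hw'
    linear_combination ha + hf' + hw'
  obtain ⟨v, hv0, hvM⟩ := Matrix.exists_mulVec_eq_zero_iff.mpr hdetM
  -- pointwise form of the kernel equation: w v = a v + f v
  have h0 := congrFun hvM 0
  have h1 := congrFun hvM 1
  simp [Matrix.mulVec, dotProduct, Fin.sum_univ_two, Matrix.one_apply] at h0 h1
  have hv00 : w 0 0 * v 0 + w 0 1 * v 1 = a * v 0 + (f 0 0 * v 0 + f 0 1 * v 1) := by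
    linear_combination h0
  have hv11 : w 1 0 * v 0 + w 1 1 * v 1 = a * v 1 + (f 1 0 * v 0 + f 1 1 * v 1) := by
    linear_combination h1
  -- Cayley–Hamilton applied to v
  have hCHf0 : f 0 0 * (f 0 0 * v 0 + f 0 1 * v 1) + f 0 1 * (f 1 0 * v 0 + f 1 1 * v 1)
      = (f 0 0 + f 1 1) * (f 0 0 * v 0 + f 0 1 * v 1) - v 0 := by
    linear_combination (-(v 0)) * hf'
  have hCHf1 : f 1 0 * (f 0 0 * v 0 + f 0 1 * v 1) + f 1 1 * (f 1 0 * v 0 + f 1 1 * v 1)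
      = (f 0 0 + f 1 1) * (f 1 0 * v 0 + f 1 1 * v 1) - v 1 := by
    linear_combination (-(v 1)) * hf'
  have hCHw0 : w 0 0 * (w 0 0 * v 0 + w 0 1 * v 1) + w 0 1 * (w 1 0 * v 0 + w 1 1 * v 1)
      = (w 0 0 + w 1 1) * (w 0 0 * v 0 + w 0 1 * v 1) - v 0 := by
    linear_combination (-(v 0)) * hw'
  have hCHw1 : w 1 0 * (w 0 0 * v 0 + w 0 1 * v 1) + w 1 1 * (w 1 0 * v 0 + w 1 1 * v 1)
      = (w 0 0 + w 1 1) * (w 1 0 * v 0 + w 1 1 * v 1) - v 1 := by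
    linear_combination (-(v 1)) * hw'
  -- action of w on f v
  have hwfv0 : w 0 0 * (f 0 0 * v 0 + f 0 1 * v 1) + w 0 1 * (f 1 0 * v 0 + f 1 1 * v 1)
      = (a * ((w 0 0 + w 1 1) - a) - 1) * v 0
        + ((w 0 0 + w 1 1) - a) * (f 0 0 * v 0 + f 0 1 * v 1) := by
    linear_combination hCHw0 - (w 0 0) * hv00 - (w 0 1) * hv11 + ((w 0 0 + w 1 1) - a) * hv00
  have hwfv1 : w 1 0 * (f 0 0 * v 0 + f 0 1 * v 1) + w 1 1 * (f 1 0 * v 0 + f 1 1 * v 1)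
      = (a * ((w 0 0 + w 1 1) - a) - 1) * v 1
        + ((w 0 0 + w 1 1) - a) * (f 1 0 * v 0 + f 1 1 * v 1) := by
    linear_combination hCHw1 - (w 1 0) * hv00 - (w 1 1) * hv11 + ((w 0 0 + w 1 1) - a) * hv11
  refine ⟨!![v 0, f 0 0 * v 0 + f 0 1 * v 1; v 1, f 1 0 * v 0 + f 1 1 * v 1], ?_, ?_, ?_⟩
  · -- invertibility: v and f v are linearly independent
    rw [isUnit_iff_ne_zero]
    rw [Matrix.det_fin_two_of]
    intro hdet
    have hvne : v 0 ≠ 0 ∨ v 1 ≠ 0 := by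
      by_contra h
      push_neg at h
      exact hv0 (funext fun i => by fin_cases i <;> simp [h.1, h.2])
    have hev : ∃ μ : ℂ, f 0 0 * v 0 + f 0 1 * v 1 = μ * v 0
        ∧ f 1 0 * v 0 + f 1 1 * v 1 = μ * v 1 := by
      rcases hvne with hc0 | hc1
      · refine ⟨(f 0 0 * v 0 + f 0 1 * v 1) / v 0, by field_simp, ?_⟩
        field_simp
        linear_combination hdet
      · refine ⟨(f 1 0 * v 0 + f 1 1 * v 1) / v 1, ?_, by field_simp⟩
        field_simp
        linear_combination -hdet
    obtain ⟨μ, hμ0, hμ1⟩ := hev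
    have hfveq : f *ᵥ v = μ • v := by
      funext i
      fin_cases i <;> simp [Matrix.mulVec, dotProduct, Fin.sum_univ_two]
      · linear_combination hμ0
      · linear_combination hμ1
    have hwveq : w *ᵥ v = (a + μ) • v := by
      funext i
      fin_cases i <;> simp [Matrix.mulVec, dotProduct, Fin.sum_univ_two]
      · linear_combination hv00 + hμ0
      · linear_combination hv11 + hμ1
    have hker : (f * w - w * f) *ᵥ v = 0 := by
      rw [Matrix.sub_mulVec, ← Matrix.mulVec_mulVec, ← Matrix.mulVec_mulVec, hfveq, hwveq,
        Matrix.mulVec_smul, Matrix.mulVec_smul, hfveq, hwveq, smul_smul, smul_smul,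
        mul_comm (a + μ) μ, sub_self]
    have hz : v = 0 := by
      have hU : IsUnit (f * w - w * f).det := (Matrix.isUnit_iff_isUnit_det _).mp hgen
      have hinv := Matrix.nonsing_inv_mul _ hU
      calc v = (1 : Matrix (Fin 2) (Fin 2) ℂ) *ᵥ v := by simp
        _ = ((f * w - w * f)⁻¹ * (f * w - w * f)) *ᵥ v := by rw [hinv]
        _ = (f * w - w * f)⁻¹ *ᵥ ((f * w - w * f) *ᵥ v) := by rw [Matrix.mulVec_mulVec]
        _ = 0 := by rw [hker]; simp
    exact hv0 hz
  · -- f * g = g * companion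
    rw [Matrix.trace_fin_two]
    ext i j
    fin_cases i <;> fin_cases j <;> simp [Matrix.mul_apply, Fin.sum_univ_two]
    · linear_combination hCHf0
    · linear_combination hCHf1
  · -- w * g = g * W
    rw [Matrix.trace_fin_two]
    ext i j
    fin_cases i <;> fin_cases j <;> simp [Matrix.mul_apply, Fin.sum_univ_two]
    · linear_combination hv00
    · linear_combination hwfv0
    · linear_combination hv11
    · linear_combination hwfv1

theorem generic_pair_conjugate (f w f₂ w₂ : Matrix (Fin 2) (Fin 2) ℂ)
    (hf : f.det = 1) (hw : w.det = 1) (hf₂ : f₂.det = 1) (hw₂ : w₂.det = 1)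
    (hgen : IsUnit (f * w - w * f)) (hgen₂ : IsUnit (f₂ * w₂ - w₂ * f₂))
    (h1 : Matrix.trace f₂ = Matrix.trace f)
    (h2 : Matrix.trace w₂ = Matrix.trace w)
    (h3 : Matrix.trace (f₂⁻¹ * w₂) = Matrix.trace (f⁻¹ * w)) :
    ∃ g : Matrix (Fin 2) (Fin 2) ℂ, IsUnit g.det ∧
      g * f * g⁻¹ = f₂ ∧ g * w * g⁻¹ = w₂ := by
  set x := Matrix.trace f with hx
  set y := Matrix.trace w with hy
  -- the products have equal traces
  have hz : Matrix.trace (f₂ * w₂) = Matrix.trace (f * w) := by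
    have e1 := trace_inv_mul' f w hf
    have e2 := trace_inv_mul' f₂ w₂ hf₂
    rw [h1, h2] at e2
    rw [e1, e2] at h3
    linear_combination -h3
  -- choose a common root of the relevant quadratic
  obtain ⟨s, hs⟩ := IsAlgClosed.exists_pow_nat_eq
    ((y - x) ^ 2 - 4 * (2 - x * y + Matrix.trace (f * w))) (n := 2) (by norm_num)
  set a : ℂ := ((y - x) + s) / 2 with haa
  have ha : a ^ 2 - (y - x) * a + (2 - x * y + Matrix.trace (f * w)) = 0 := by
    rw [haa]; linear_combination hs / 4
  have ha₂ : a ^ 2 - (Matrix.trace w₂ - Matrix.trace f₂) * a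
      + (2 - Matrix.trace f₂ * Matrix.trace w₂ + Matrix.trace (f₂ * w₂)) = 0 := by
    rw [h1, h2, hz]; exact ha
  obtain ⟨g₁, hu1, hfg1, hwg1⟩ := key_normal_form f w hf hw hgen a ha
  obtain ⟨g₂, hu2, hfg2, hwg2⟩ := key_normal_form f₂ w₂ hf₂ hw₂ hgen₂ a ha₂
  rw [h1] at hfg2
  rw [h2] at hwg2
  have i1' : g₁⁻¹ * g₁ = 1 := Matrix.nonsing_inv_mul _ hu1
  have i2 : g₂ * g₂⁻¹ = 1 := Matrix.mul_nonsing_inv _ hu2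
  have hinv : (g₂ * g₁⁻¹)⁻¹ = g₁ * g₂⁻¹ := by
    rw [Matrix.mul_inv_rev, Matrix.nonsing_inv_nonsing_inv _ hu1]
  refine ⟨g₂ * g₁⁻¹, ?_, ?_, ?_⟩
  · rw [Matrix.det_mul]
    exact hu2.mul (Matrix.isUnit_nonsing_inv_det _ hu1)
  · rw [hinv]
    calc g₂ * g₁⁻¹ * f * (g₁ * g₂⁻¹)
        = g₂ * (g₁⁻¹ * (f * g₁)) * g₂⁻¹ := by simp only [Matrix.mul_assoc]
      _ = g₂ * (g₁⁻¹ * (g₁ * !![0, -1; 1, x])) * g₂⁻¹ := by rw [hfg1]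
      _ = g₂ * !![0, -1; 1, x] * g₂⁻¹ := by rw [← Matrix.mul_assoc g₁⁻¹, i1', Matrix.one_mul]
      _ = f₂ * (g₂ * g₂⁻¹) := by rw [← hfg2, Matrix.mul_assoc]
      _ = f₂ := by rw [i2, Matrix.mul_one]
  · rw [hinv]
    calc g₂ * g₁⁻¹ * w * (g₁ * g₂⁻¹)
        = g₂ * (g₁⁻¹ * (w * g₁)) * g₂⁻¹ := by simp only [Matrix.mul_assoc]
      _ = g₂ * (g₁⁻¹ * (g₁ * !![a, a * (y - a) - 1; 1, y - a])) * g₂⁻¹ := by rw [hwg1]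
      _ = g₂ * !![a, a * (y - a) - 1; 1, y - a] * g₂⁻¹ := by
            rw [← Matrix.mul_assoc g₁⁻¹, i1', Matrix.one_mul]
      _ = w₂ * (g₂ * g₂⁻¹) := by rw [← hwg2, Matrix.mul_assoc]
      _ = w₂ := by rw [i2, Matrix.mul_one]
end
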